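/- Let R be a commutative ring, u, v ∈ R, and l ≥ 2. Let A be an l × (l−2) matrix over R and let α, β, γ, δ ∈ R^l be column vectors. Define three square matrices: M₊ is the (l+2) × (l+2) matrix with first row (1, −1, −u, u, 0, …, 0), second row (0, v, 0, −1, 0, …, 0), and (i+2)-nd row (α_i, β_i, γ_i, δ_i, A_{i,1}, …, A_{i,l−2}); M₋ is the (l+2) × (l+2) matrix with first row (1, −1, −u, u, 0, …, 0), second row (v, 0, −1, 0, 0, …, 0), and the same remaining rows as M₊; M₀ is the l × l matrix whose first two columns are α + β and γ + δ and whose remaining columns are the columns of A. Then det M₊ − det M₋ = (uv − 1) · det M₀. (This is the skein relation for the Alexander polynomial Δ₀ of labeled virtual link diagrams L₊, L₋, L₀ differing at one crossing.) -/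

import Mathlib

/-!
Since `M₊` and `M₋` differ only in their second row, multilinearity gives
`det M₊ - det M₋ = det N`, where `N` has second row `(-v, v, 1, -1, 0, …, 0)`. Adding column 0
to column 1 and column 2 to column 3 leaves the first two rows of `N` supported on columns 0
and 2, while the remaining rows become `(α, α + β, γ, γ + δ, A)`. After swapping columns 1 and 2
the matrix is block lower triangular with diagonal blocks `!![1, -u; -v, 1]` and `M₀`.
-/

open Matrix

theorem Matrix.det_sub_det_eq_det_updateRow_sub {n R : Type*} [DecidableEq n] [Fintype n]
    [CommRing R] (M M' : Matrix n n R) (i : n) (h : ∀ j ≠ i, M j = M' j) :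
    M.det - M'.det = (M.updateRow i (M i - M' i)).det := by
  have hM' : M' = M.updateRow i (M' i) := by
    ext j k
    by_cases hj : j = i
    · simp [hj]
    · simp [updateRow_ne hj, h j hj]
  have hsub : (M.updateRow i (M i - M' i)).det =
      (M.updateRow i (M i)).det - (M.updateRow i (M' i)).det :=
    (detRowAlternating : (n → R) [⋀^n]→ₗ[R] R).map_update_sub M i (M i) (M' i)
  rw [hsub, updateRow_eq_self, ← hM']

theorem Matrix.det_add_two_of_upperRight_eq_zero {R : Type*} [CommRing R] {l : ℕ}
    (M : Matrix (Fin (l + 2)) (Fin (l + 2)) R)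
    (h₀ : ∀ k : Fin l, M 0 (k.addNat 2) = 0) (h₁ : ∀ k : Fin l, M 1 (k.addNat 2) = 0) :
    M.det = (M 0 0 * M 1 1 - M 0 1 * M 1 0) *
      (M.submatrix (Fin.addNat · 2) (Fin.addNat · 2)).det := by
  let e : Fin 2 ⊕ Fin l ≃ Fin (l + 2) := finSumFinEquiv.trans (finCongr (add_comm 2 l))
  have he₀ : e (Sum.inl 0) = 0 := rfl
  have he₁ : e (Sum.inl 1) = 1 := rfl
  have he : ∀ k : Fin l, e (Sum.inr k) = k.addNat 2 := fun k => Fin.ext (by simp [e])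
  have hz : (M.submatrix e e).toBlocks₁₂ = 0 := by
    ext i k
    fin_cases i
    · simpa [toBlocks₁₂, he₀, he] using h₀ k
    · simpa [toBlocks₁₂, he₁, he] using h₁ k
  rw [← det_submatrix_equiv_self e M, ← fromBlocks_toBlocks (M.submatrix e e), hz,
    det_fromBlocks_zero₁₂, det_fin_two]
  simp only [toBlocks₁₁, toBlocks₂₂, of_apply, submatrix_apply, he₀, he₁, he]
  rfl

/-- The skein relation for the Alexander polynomial `Δ₀` of labeled virtual link
diagrams `L₊`, `L₋`, `L₀` differing at one crossing:
`det M₊ − det M₋ = (uv − 1) · det M₀`. -/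
theorem skein_relation_det {R : Type*} [CommRing R] (u v : R) (l : ℕ) (hl : 2 ≤ l)
    (A : Matrix (Fin l) (Fin (l - 2)) R) (α β γ δ : Fin l → R)
    (Mp Mm : Matrix (Fin (l + 2)) (Fin (l + 2)) R)
    (M₀ : Matrix (Fin l) (Fin l) R)
    (hMp : Mp = Matrix.of fun (i j : Fin (l + 2)) =>
      if (i : ℕ) = 0 then
        (if (j : ℕ) = 0 then 1 else if (j : ℕ) = 1 then -1
         else if (j : ℕ) = 2 then -u else if (j : ℕ) = 3 then u else 0)
      else if (i : ℕ) = 1 then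
        (if (j : ℕ) = 1 then v else if (j : ℕ) = 3 then -1 else 0)
      else
        (if h0 : (j : ℕ) = 0 then α ⟨(i : ℕ) - 2, by omega⟩
         else if h1 : (j : ℕ) = 1 then β ⟨(i : ℕ) - 2, by omega⟩
         else if h2 : (j : ℕ) = 2 then γ ⟨(i : ℕ) - 2, by omega⟩
         else if h3 : (j : ℕ) = 3 then δ ⟨(i : ℕ) - 2, by omega⟩
         else A ⟨(i : ℕ) - 2, by omega⟩ ⟨(j : ℕ) - 4, by omega⟩))
    (hMm : Mm = Matrix.of fun (i j : Fin (l + 2)) =>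
      if (i : ℕ) = 0 then
        (if (j : ℕ) = 0 then 1 else if (j : ℕ) = 1 then -1
         else if (j : ℕ) = 2 then -u else if (j : ℕ) = 3 then u else 0)
      else if (i : ℕ) = 1 then
        (if (j : ℕ) = 0 then v else if (j : ℕ) = 2 then -1 else 0)
      else
        (if h0 : (j : ℕ) = 0 then α ⟨(i : ℕ) - 2, by omega⟩
         else if h1 : (j : ℕ) = 1 then β ⟨(i : ℕ) - 2, by omega⟩
         else if h2 : (j : ℕ) = 2 then γ ⟨(i : ℕ) - 2, by omega⟩
         else if h3 : (j : ℕ) = 3 then δ ⟨(i : ℕ) - 2, by omega⟩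
         else A ⟨(i : ℕ) - 2, by omega⟩ ⟨(j : ℕ) - 4, by omega⟩))
    (hM₀ : M₀ = Matrix.of fun (i j : Fin l) =>
      if h0 : (j : ℕ) = 0 then α i + β i
      else if h1 : (j : ℕ) = 1 then γ i + δ i
      else A i ⟨(j : ℕ) - 2, by omega⟩) :
    Mp.det - Mm.det = (u * v - 1) * M₀.det := by
  have hrows : ∀ i ≠ 1, Mp i = Mm i := by
    intro i hi
    have hi' : (i : ℕ) ≠ 1 := fun h => hi (Fin.ext (by simpa using h))
    ext j
    simp [hMp, hMm, hi']
  let N := Mp.updateRow 1 (Mp 1 - Mm 1)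
  let N₁ := N.updateCol 1 fun i => N i 1 + N i 0
  let N₂ := N₁.updateCol ⟨3, by omega⟩ fun i => N₁ i ⟨3, by omega⟩ + N₁ i ⟨2, by omega⟩
  let K := N₂.submatrix id (Equiv.swap 1 ⟨2, by omega⟩)
  have hK : K 0 0 = 1 ∧ K 0 1 = -u ∧ K 1 0 = -v ∧ K 1 1 = 1 ∧
      (∀ k : Fin l, K 0 (k.addNat 2) = 0) ∧ (∀ k : Fin l, K 1 (k.addNat 2) = 0) ∧
      K.submatrix (Fin.addNat · 2) (Fin.addNat · 2) = M₀ := by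
    refine ⟨?_, ?_, ?_, ?_, fun ⟨k, _⟩ => ?_, fun ⟨k, _⟩ => ?_, Matrix.ext fun i ⟨k, _⟩ => ?_⟩
    -- split off the columns `2` and `3`, which the swap and the column operations touch
    all_goals
      (try rcases k with _ | _ | k) <;>
      simp only [K, N₂, N₁, N, hMp, hMm, hM₀, submatrix_apply, Equiv.swap_apply_def, of_apply,
        updateCol_apply, updateRow_apply, Pi.sub_apply, id, Fin.ext_iff, Fin.val_zero,
        Fin.val_one, Fin.val_addNat] <;>
      simp [add_comm]
  obtain ⟨h00, h01, h10, h11, hK₀, hK₁, hKM₀⟩ := hK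
  calc Mp.det - Mm.det = N.det := det_sub_det_eq_det_updateRow_sub Mp Mm 1 hrows
    _ = N₂.det := by
      rw [det_updateCol_add_self _ (by simp [Fin.ext_iff]), det_updateCol_add_self _ (by simp)]
    _ = -K.det := by
      rw [det_permute', Equiv.Perm.sign_swap (by simp [Fin.ext_iff])]
      simp
    _ = (u * v - 1) * M₀.det := by
      rw [det_add_two_of_upperRight_eq_zero K hK₀ hK₁, h00, h01, h10, h11, hKM₀]
      ring
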